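/- Define c̃(ρ) = (erf⁻¹(ρ))². Then the elasticity ρ·c̃'(ρ)/c̃(ρ) satisfies lim_{ρ→0⁺} ρ·c̃'(ρ)/c̃(ρ) = 2 and lim_{ρ→1⁻} ρ·c̃'(ρ)/c̃(ρ) = +∞. -/

import Mathlib

/-!
Write `ρ = erf x`. Differentiating the inverse function gives `c̃'(erf x) = √π x e^{x²}`, so the
elasticity at `ρ = erf x` equals `√π · erf x · e^{x²} / x`. As `ρ → 0⁺` we have `x → 0⁺`, where
`erf x / x → erf' 0 = 2 / √π` and `e^{x²} → 1`, giving the limit `2`; as `ρ → 1⁻` we have `x → ∞`,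
where `erf x → 1` while `e^{x²} / x → ∞`.
-/

open Real Filter Set Topology

noncomputable def erf (z : ℝ) : ℝ :=
  (2 / Real.sqrt Real.pi) * ∫ t in (0:ℝ)..z, Real.exp (-t ^ 2)

lemma hasDerivAt_erf (x : ℝ) : HasDerivAt erf (2 / √π * exp (-x ^ 2)) x := by
  have hcont : Continuous fun t : ℝ => exp (-t ^ 2) := by fun_prop
  exact (intervalIntegral.integral_hasDerivAt_right (hcont.intervalIntegrable _ _)
    (hcont.stronglyMeasurableAtFilter _ _) hcont.continuousAt).const_mul _

lemma erf_zero : erf 0 = 0 := by simp [erf]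

lemma continuous_erf : Continuous erf :=
  continuous_iff_continuousAt.2 fun x => (hasDerivAt_erf x).continuousAt

lemma erf_strictMono : StrictMono erf :=
  strictMono_of_deriv_pos fun x => by rw [(hasDerivAt_erf x).deriv]; positivity

lemma tendsto_erf_atTop : Tendsto erf atTop (𝓝 1) := by
  have hint : MeasureTheory.IntegrableOn (fun t : ℝ => exp (-t ^ 2)) (Ioi 0) := by
    simpa using (integrable_exp_neg_mul_sq one_pos).integrableOn
  have hgauss : ∫ t in Ioi (0:ℝ), exp (-t ^ 2) = √π / 2 := by
    simpa using integral_gaussian_Ioi 1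
  have h := (MeasureTheory.intervalIntegral_tendsto_integral_Ioi 0 hint tendsto_id).const_mul
    (2 / √π)
  have hone : 2 / √π * (√π / 2) = 1 := by field_simp
  rw [hgauss, hone] at h
  exact h

lemma erf_lt_one (x : ℝ) : erf x < 1 :=
  (erf_strictMono (lt_add_one x)).trans_le
    (erf_strictMono.monotone.ge_of_tendsto tendsto_erf_atTop _)

lemma Ioo_erf_one_subset_range_erf (x : ℝ) : Ioo (erf x) 1 ⊆ range erf := by
  intro ρ hρ
  obtain ⟨y, hy⟩ := (tendsto_erf_atTop.eventually (eventually_gt_nhds hρ.2)).exists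
  have hxy : x ≤ y := erf_strictMono.le_iff_le.1 (hρ.1.trans hy).le
  obtain ⟨z, -, hz⟩ := intermediate_value_Icc hxy continuous_erf.continuousOn ⟨hρ.1.le, hy.le⟩
  exact ⟨z, hz⟩

lemma range_erf_mem_nhds (x : ℝ) : range erf ∈ 𝓝 (erf x) :=
  mem_of_superset (Ioo_mem_nhds (erf_strictMono (sub_one_lt x)) (erf_lt_one x))
    (Ioo_erf_one_subset_range_erf _)

lemma range_erf_mem_nhds_zero : range erf ∈ 𝓝 0 := by
  simpa only [erf_zero] using range_erf_mem_nhds 0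

noncomputable def erfInv : ℝ → ℝ := Function.invFun erf

lemma erfInv_erf (x : ℝ) : erfInv (erf x) = x :=
  Function.leftInverse_invFun erf_strictMono.injective x

lemma erfInv_zero : erfInv 0 = 0 := by simpa only [erf_zero] using erfInv_erf 0

lemma erf_erfInv {ρ : ℝ} (hρ : ρ ∈ range erf) : erf (erfInv ρ) = ρ :=
  Function.invFun_eq hρ

lemma lt_erfInv_iff {ρ b : ℝ} (hρ : ρ ∈ range erf) : b < erfInv ρ ↔ erf b < ρ := by
  obtain ⟨x, rfl⟩ := hρ
  rw [erfInv_erf, erf_strictMono.lt_iff_lt]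

lemma continuousAt_erfInv (x : ℝ) : ContinuousAt erfInv (erf x) := by
  have hmono : MonotoneOn erfInv (range erf) := by
    rintro _ ⟨a, rfl⟩ _ ⟨b, rfl⟩ hab
    rwa [erfInv_erf, erfInv_erf, ← erf_strictMono.le_iff_le]
  have himage : erfInv '' range erf = univ :=
    eq_univ_of_forall fun y => ⟨erf y, mem_range_self y, erfInv_erf y⟩
  exact continuousAt_of_monotoneOn_of_image_mem_nhds hmono (range_erf_mem_nhds x)
    (by rw [himage]; exact univ_mem)

lemma hasDerivAt_erfInv (x : ℝ) :
    HasDerivAt erfInv (2 / √π * exp (-x ^ 2))⁻¹ (erf x) := by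
  have hderiv : HasDerivAt erf (2 / √π * exp (-x ^ 2)) (erfInv (erf x)) := by
    rw [erfInv_erf]; exact hasDerivAt_erf x
  refine hderiv.of_local_left_inverse (continuousAt_erfInv x) (by positivity) ?_
  filter_upwards [range_erf_mem_nhds x] with ρ hρ using erf_erfInv hρ

lemma tendsto_erfInv_nhdsGT_zero : Tendsto erfInv (𝓝[>] 0) (𝓝[>] 0) := by
  have hcont : Tendsto erfInv (𝓝 0) (𝓝 0) := by
    have h := continuousAt_erfInv 0
    rwa [erf_zero, ContinuousAt, erfInv_zero] at h
  refine tendsto_nhdsWithin_iff.2 ⟨hcont.mono_left nhdsWithin_le_nhds, ?_⟩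
  filter_upwards [nhdsWithin_le_nhds range_erf_mem_nhds_zero, self_mem_nhdsWithin] with ρ hρ hρ0
  exact (lt_erfInv_iff hρ).2 (by rwa [erf_zero])

lemma tendsto_erfInv_nhdsLT_one : Tendsto erfInv (𝓝[<] 1) atTop := by
  refine tendsto_atTop.2 fun b => ?_
  filter_upwards [Ioo_mem_nhdsLT (erf_lt_one b)] with ρ hρ
  exact ((lt_erfInv_iff (Ioo_erf_one_subset_range_erf b hρ)).2 hρ.1).le

noncomputable def ctilde (ρ : ℝ) : ℝ := erfInv ρ ^ 2

lemma deriv_ctilde_erf (x : ℝ) : deriv ctilde (erf x) = √π * x * exp (x ^ 2) := by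
  have hderiv : HasDerivAt ctilde
      (2 * erfInv (erf x) ^ (2 - 1) * (2 / √π * exp (-x ^ 2))⁻¹) (erf x) :=
    (hasDerivAt_erfInv x).pow 2
  rw [hderiv.deriv, erfInv_erf, exp_neg]
  have : √π ≠ 0 := (sqrt_pos.2 pi_pos).ne'
  field_simp
  norm_num

/-- The elasticity `ρ c̃'(ρ) / c̃(ρ)` at `ρ = erf x`. -/
noncomputable def ctildeElasticity (x : ℝ) : ℝ := √π * erf x * exp (x ^ 2) / x

lemma ctildeElasticity_erfInv {ρ : ℝ} (hρ : ρ ∈ range erf) :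
    ctildeElasticity (erfInv ρ) = ρ * deriv ctilde ρ / ctilde ρ := by
  obtain ⟨x, rfl⟩ := hρ
  rw [deriv_ctilde_erf, ctilde, erfInv_erf, ctildeElasticity]
  rcases eq_or_ne x 0 with rfl | hx
  · -- both sides are `0`, by the convention `a / 0 = 0`
    simp
  · field_simp

lemma tendsto_erf_div_self : Tendsto (fun x => erf x / x) (𝓝[≠] 0) (𝓝 (2 / √π)) := by
  have h : Tendsto (slope erf 0) (𝓝[≠] 0) (𝓝 (2 / √π)) := by
    simpa using hasDerivAt_iff_tendsto_slope.1 (hasDerivAt_erf 0)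
  refine h.congr fun x => ?_
  simp [slope_def_field, erf_zero]

lemma tendsto_ctildeElasticity_zero : Tendsto ctildeElasticity (𝓝[≠] 0) (𝓝 2) := by
  have hexp : Tendsto (fun x : ℝ => exp (x ^ 2)) (𝓝[≠] 0) (𝓝 1) := by
    have h := (continuous_exp.comp (continuous_pow 2)).tendsto 0
    simpa [Function.comp_def] using h.mono_left nhdsWithin_le_nhds
  have h := (tendsto_erf_div_self.const_mul √π).mul hexp
  rw [mul_div_cancel₀ _ (sqrt_pos.2 pi_pos).ne', mul_one] at h
  refine h.congr fun x => ?_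
  rw [ctildeElasticity]
  ring

lemma tendsto_ctildeElasticity_atTop : Tendsto ctildeElasticity atTop atTop := by
  have hexp : Tendsto (fun x : ℝ => exp (x ^ 2) / x) atTop atTop := by
    have h := ((tendsto_exp_div_pow_atTop 1).comp
      (tendsto_pow_atTop two_ne_zero)).atTop_mul_atTop₀ tendsto_id
    refine h.congr' ?_
    filter_upwards [eventually_gt_atTop 0] with x hx
    simp only [Function.comp_apply, pow_one, id]
    field_simp
  refine ((tendsto_erf_atTop.const_mul √π).pos_mul_atTop (by simpa using pi_pos) hexp).congr
    fun x => ?_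
  rw [ctildeElasticity]
  ring

/-- The elasticity of  tends to  as  and to  as . -/
theorem ctilde_elasticity_limits :
    Filter.Tendsto (fun ρ => ρ * deriv ctilde ρ / ctilde ρ)
      (nhdsWithin 0 (Set.Ioi 0)) (nhds 2) ∧
    Filter.Tendsto (fun ρ => ρ * deriv ctilde ρ / ctilde ρ)
      (nhdsWithin 1 (Set.Iio 1)) Filter.atTop := by
  constructor
  · have hx : Tendsto erfInv (𝓝[>] 0) (𝓝[≠] 0) :=
      tendsto_erfInv_nhdsGT_zero.mono_right (nhdsWithin_mono _ fun x hx => ne_of_gt hx)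
    refine (tendsto_ctildeElasticity_zero.comp hx).congr' ?_
    filter_upwards [nhdsWithin_le_nhds range_erf_mem_nhds_zero] with ρ hρ
    exact ctildeElasticity_erfInv hρ
  · refine (tendsto_ctildeElasticity_atTop.comp tendsto_erfInv_nhdsLT_one).congr' ?_
    filter_upwards [Ioo_mem_nhdsLT (erf_lt_one 0)] with ρ hρ
    exact ctildeElasticity_erfInv (Ioo_erf_one_subset_range_erf 0 hρ)
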